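/- arXiv:2505.22565 — 2 statements merged into one kernel-verified Lean document; each statement's English description precedes it below -/
import Mathlib

section
/- Let H1, H2, H3, H4 be subgroups of a finite group G. Suppose H1 ∩ H2 = (H1 ∩ H2 ∩ H3)(H1 ∩ H2 ∩ H4), i.e., H1 ∩ H2 equals the product set of its intersections with H3 and with H4. Then the Ingleton inequality holds: |H1| · |H2| · |H3 ∩ H4| · |H1 ∩ H2 ∩ H3| · |H1 ∩ H2 ∩ H4| ≥ |H1 ∩ H2| · |H1 ∩ H3| · |H1 ∩ H4| · |H2 ∩ H3| · |H2 ∩ H4|. -/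
/-!
The product formula |AB| · |A ∩ B| = |A| · |B| for subgroups A, B gives, since
(C ∩ A)(C ∩ B) ⊆ C, the inequality |C ∩ A| · |C ∩ B| ≤ |C| · |A ∩ B ∩ C|, with equality when
(C ∩ A)(C ∩ B) = C. Applying the inequality to (H1; H3, H4), (H2; H3, H4) and (H3 ∩ H4; H1, H2),
and the equality case, which is the hypothesis, to (H1 ∩ H2; H3, H4), and multiplying everything
out gives the Ingleton inequality.
-/

open Pointwise

namespace Subgroup

variable {G : Type*} [Group G]

theorem ncard_image_mk_eq_relIndex (A B : Subgroup G) :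
    ((QuotientGroup.mk : G → G ⧸ B) '' A).ncard = B.relIndex A := by
  have smul_one_coe (a : A) : a • ((1 : G) : G ⧸ B) = ((a : G) : G ⧸ B) :=
    congrArg _ (mul_one (a : G))
  have horbit : (QuotientGroup.mk '' A : Set (G ⧸ B)) = MulAction.orbit A ((1 : G) : G ⧸ B) := by
    ext x
    simp [MulAction.mem_orbit_iff, smul_one_coe]
  have hstab : MulAction.stabilizer A ((1 : G) : G ⧸ B) = B.subgroupOf A := by
    ext a
    simp [mem_subgroupOf, smul_one_coe, QuotientGroup.eq]
  rw [horbit, ← MulAction.index_stabilizer, hstab, relIndex]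

theorem card_mul_mul_card_inf (A B : Subgroup G) :
    Nat.card ((A : Set G) * (B : Set G)) * Nat.card ↥(A ⊓ B) = Nat.card A * Nat.card B := by
  rw [card_mul_eq_card_subgroup_mul_card_quotient, Nat.card_coe_set_eq, ncard_image_mk_eq_relIndex,
    ← (B.subgroupOf A).card_mul_index, ← inf_subgroupOf_left,
    Nat.card_congr (subgroupOfEquivOfLe inf_le_left).toEquiv, relIndex, inf_subgroupOf_left]
  ring

theorem card_inf_mul_card_inf_le (C A B : Subgroup G) [Finite C] :
    Nat.card ↥(C ⊓ A) * Nat.card ↥(C ⊓ B) ≤ Nat.card C * Nat.card ↥(A ⊓ B ⊓ C) := by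
  rw [← card_mul_mul_card_inf, show C ⊓ A ⊓ (C ⊓ B) = A ⊓ B ⊓ C by ac_rfl]
  gcongr
  refine Nat.card_mono (Set.toFinite _) ?_
  rintro x ⟨a, ha, b, hb, rfl⟩
  exact C.mul_mem ha.1 hb.1

theorem card_mul_card_inf_of_mul_eq {A B C : Subgroup G} (h : (A : Set G) * (B : Set G) = C) :
    Nat.card C * Nat.card ↥(A ⊓ B) = Nat.card A * Nat.card B := by
  have := card_mul_mul_card_inf A B
  rwa [h] at this

end Subgroup

theorem stmt5 {G : Type*} [Group G] [Finite G] (H1 H2 H3 H4 : Subgroup G)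
    (h : ((H1 ⊓ H2 ⊓ H3 : Subgroup G) : Set G) * ((H1 ⊓ H2 ⊓ H4 : Subgroup G) : Set G)
      = ((H1 ⊓ H2 : Subgroup G) : Set G)) :
    Nat.card (H1 : Subgroup G) * Nat.card (H2 : Subgroup G) * Nat.card (H3 ⊓ H4 : Subgroup G) * Nat.card (H1 ⊓ H2 ⊓ H3 : Subgroup G) * Nat.card (H1 ⊓ H2 ⊓ H4 : Subgroup G) ≥ Nat.card (H1 ⊓ H2 : Subgroup G) * Nat.card (H1 ⊓ H3 : Subgroup G) * Nat.card (H1 ⊓ H4 : Subgroup G) * Nat.card (H2 ⊓ H3 : Subgroup G) * Nat.card (H2 ⊓ H4 : Subgroup G) := by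
  have h12 := Subgroup.card_mul_card_inf_of_mul_eq h
  rw [show H1 ⊓ H2 ⊓ H3 ⊓ (H1 ⊓ H2 ⊓ H4) = H1 ⊓ H2 ⊓ (H3 ⊓ H4) by ac_rfl] at h12
  have h1 := Subgroup.card_inf_mul_card_inf_le H1 H3 H4
  have h2 := Subgroup.card_inf_mul_card_inf_le H2 H3 H4
  have h34 := Subgroup.card_inf_mul_card_inf_le (H3 ⊓ H4) H1 H2
  set q1 := Nat.card ↥(H3 ⊓ H4 ⊓ H1)
  set q2 := Nat.card ↥(H3 ⊓ H4 ⊓ H2)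
  set k12 := Nat.card ↥(H1 ⊓ H2)
  set k1234 := Nat.card ↥(H1 ⊓ H2 ⊓ (H3 ⊓ H4))
  calc _ = k12 * ((Nat.card ↥(H1 ⊓ H3) * Nat.card ↥(H1 ⊓ H4))
          * (Nat.card ↥(H2 ⊓ H3) * Nat.card ↥(H2 ⊓ H4))) := by ring
    _ ≤ k12 * ((Nat.card H1 * q1) * (Nat.card H2 * q2)) := by gcongr
    _ = k12 * Nat.card H1 * Nat.card H2 * (q1 * q2) := by ring
    _ ≤ k12 * Nat.card H1 * Nat.card H2 * (Nat.card ↥(H3 ⊓ H4) * k1234) := by gcongr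
    _ = Nat.card H1 * Nat.card H2 * Nat.card ↥(H3 ⊓ H4) * (k12 * k1234) := by ring
    _ = _ := by rw [h12]; ring
end

section
/- If G is a finite abelian group and H1, H2, H3, H4 are subgroups of G, then the Ingleton inequality holds for (H1, H2, H3, H4); that is, abelian groups contain no Ingleton offenders. -/
/-!
In an abelian group every subgroup is normal, so the product formula
`|A ⊔ B| * |A ⊓ B| = |A| * |B|` holds for all pairs, and hence `|A| * |B| ≤ |C| * |D|` whenever
`A ⊔ B ≤ C` and `A ⊓ B ≤ D`. With `P = H1 ⊔ H2` this bounds `|H1 ⊓ Hi| * |H2 ⊓ Hi|` by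
`|Hi ⊓ P| * |H1 ⊓ H2 ⊓ Hi|` for `i = 3, 4`, and `|H3 ⊓ P| * |H4 ⊓ P|` by `|P| * |H3 ⊓ H4|`.
Multiplying these and substituting `|P| * |H1 ⊓ H2| = |H1| * |H2|` gives the Ingleton inequality.
-/

namespace Subgroup

variable {G : Type*}

theorem card_sup_mul_card_inf [Group G] (H K : Subgroup G) [K.Normal] :
    Nat.card (H ⊔ K : Subgroup G) * Nat.card (H ⊓ K : Subgroup G) = Nat.card H * Nat.card K := by
  have hsup : Nat.card (H ⊔ K : Subgroup G) = Nat.card K * K.relIndex H := by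
    rw [← relIndex_sup_right, ← relIndex_bot_left, ← relIndex_bot_left,
      ← relIndex_mul_relIndex _ _ _ bot_le le_sup_right]
  have hH : Nat.card H = Nat.card (H ⊓ K : Subgroup G) * K.relIndex H := by
    rw [← inf_relIndex_left, ← relIndex_bot_left, ← relIndex_bot_left,
      ← relIndex_mul_relIndex _ _ _ bot_le inf_le_left]
  rw [hsup, hH]
  ring

theorem card_mul_card_le_of_sup_le_of_inf_le [Group G] {A B C D : Subgroup G} [B.Normal]
    [Finite C] [Finite D] (hC : A ⊔ B ≤ C) (hD : A ⊓ B ≤ D) :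
    Nat.card A * Nat.card B ≤ Nat.card C * Nat.card D := by
  rw [← card_sup_mul_card_inf]
  exact Nat.mul_le_mul (card_le_of_le hC) (card_le_of_le hD)

theorem card_inf_mul_card_inf_le_s14 [CommGroup G] [Finite G] (H₁ H₂ K : Subgroup G) :
    Nat.card (H₁ ⊓ K : Subgroup G) * Nat.card (H₂ ⊓ K : Subgroup G) ≤
      Nat.card (K ⊓ (H₁ ⊔ H₂) : Subgroup G) * Nat.card (H₁ ⊓ H₂ ⊓ K : Subgroup G) :=
  card_mul_card_le_of_sup_le_of_inf_le
    (le_inf (sup_le inf_le_right inf_le_right) (sup_le_sup inf_le_left inf_le_left))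
    (inf_inf_distrib_right H₁ H₂ K).ge

end Subgroup

open Subgroup in
theorem stmt14 {G : Type*} [CommGroup G] [Finite G] (H1 H2 H3 H4 : Subgroup G) :
    Nat.card (H1 : Subgroup G) * Nat.card (H2 : Subgroup G) * Nat.card (H3 ⊓ H4 : Subgroup G) * Nat.card (H1 ⊓ H2 ⊓ H3 : Subgroup G) * Nat.card (H1 ⊓ H2 ⊓ H4 : Subgroup G) ≥ Nat.card (H1 ⊓ H2 : Subgroup G) * Nat.card (H1 ⊓ H3 : Subgroup G) * Nat.card (H1 ⊓ H4 : Subgroup G) * Nat.card (H2 ⊓ H3 : Subgroup G) * Nat.card (H2 ⊓ H4 : Subgroup G) := by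
  have h3 := card_inf_mul_card_inf_le_s14 H1 H2 H3
  have h4 := card_inf_mul_card_inf_le_s14 H1 H2 H4
  have h34 : Nat.card (H3 ⊓ (H1 ⊔ H2) : Subgroup G) * Nat.card (H4 ⊓ (H1 ⊔ H2) : Subgroup G) ≤
      Nat.card (H1 ⊔ H2 : Subgroup G) * Nat.card (H3 ⊓ H4 : Subgroup G) :=
    card_mul_card_le_of_sup_le_of_inf_le (sup_le inf_le_right inf_le_right)
      (inf_le_inf inf_le_left inf_le_left)
  rw [ge_iff_le, ← card_sup_mul_card_inf H1 H2]
  linarith [Nat.mul_le_mul_left (Nat.card (H1 ⊓ H2 : Subgroup G)) (Nat.mul_le_mul h3 h4),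
    Nat.mul_le_mul_left (Nat.card (H1 ⊓ H2 : Subgroup G) * Nat.card (H1 ⊓ H2 ⊓ H3 : Subgroup G) *
      Nat.card (H1 ⊓ H2 ⊓ H4 : Subgroup G)) h34]
end
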